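/- Let G, H be lists with G a prefix of H, and let f be a prefix-preserving map into lists such that for each input, removing trailing 'incomplete' operations from f(H) never removes an operation that is complete in H. If an operation op is removed from the end of f(H) (because op is not complete in H) and op also occurs in f(G), then op is the last element of f(G) and is not complete in G, hence is also removed from f(G); therefore the truncation operation preserves the prefix-preserving property of f. -/

import Mathlib

/-!
The truncation of `f H` is `(f H).rdropWhile (incomplete in H)`. By monotonicity an operation
incomplete in `H` is incomplete in `G`, so the predicate used for `G` is the weaker one, and
`rdropWhile` with a weaker predicate on a shorter prefix can only cut off more.
-/

namespace List

variable {α : Type*} {p q : α → Bool}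

theorem dropWhile_suffix_dropWhile_of_imp (h : ∀ x, q x → p x) (l : List α) :
    l.dropWhile p <:+ l.dropWhile q := by
  induction l with
  | nil => simp
  | cons a l ih =>
    by_cases hq : q a
    · simpa [dropWhile, hq, h a hq] using ih
    · simp only [dropWhile, hq]
      split
      · exact (dropWhile_suffix p).trans (suffix_cons a l)
      · exact suffix_refl _

theorem IsSuffix.dropWhile_of_imp {l₁ l₂ : List α} (hl : l₁ <:+ l₂) (h : ∀ x, q x → p x) :
    l₁.dropWhile p <:+ l₂.dropWhile q := by
  obtain ⟨C, rfl⟩ := hl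
  rw [dropWhile_append]
  split
  · exact dropWhile_suffix_dropWhile_of_imp h l₁
  · exact (dropWhile_suffix p).trans (suffix_append_of_suffix (suffix_refl l₁))

theorem IsPrefix.rdropWhile_of_imp {l₁ l₂ : List α} (hl : l₁ <+: l₂) (h : ∀ x, q x → p x) :
    l₁.rdropWhile p <+: l₂.rdropWhile q := by
  rw [rdropWhile, rdropWhile, reverse_prefix]
  exact (reverse_suffix.mpr hl).dropWhile_of_imp h

end List

/-- Truncating trailing incomplete operations (completeness being monotone
under prefixes) preserves the prefix-preserving property of `f`. -/
theorem truncation_preserves_prefix_preserving {α : Type*}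
    (complete : List α → α → Bool)
    (hmono : ∀ (G H : List α) (x : α), G <+: H →
      complete G x = true → complete H x = true)
    (f : List α → List α)
    (hf : ∀ G H : List α, G <+: H → f G <+: f H) :
    ∀ G H : List α, G <+: H →
      ((f G).reverse.dropWhile (fun op => !(complete G op))).reverse <+:
      ((f H).reverse.dropWhile (fun op => !(complete H op))).reverse := by
  intro G H hGH
  have incomplete_of_incomplete : ∀ x, !complete H x → !complete G x := by
    intro x hx
    simpa using mt (hmono G H x hGH) (by simpa using hx)
  exact (hf G H hGH).rdropWhile_of_imp incomplete_of_incomplete
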